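/- arXiv:1412.7412 — 2 statements merged into one kernel-verified Lean document; each statement's English description precedes it below -/
import Mathlib

section
/- Let x be a d×d symmetric positive semidefinite matrix, c ∈ M_d(ℝ) with cᵀc = x, W a d×d matrix Brownian motion, ε > 0, and n ≤ d. Define U_t = c + ε W_t I^n_d and X_t = U_tᵀ U_t. Then X_t is symmetric positive semidefinite for all t, and the quadratic covariations satisfy ⟨d(X_t)_{ij}, d(X_t)_{kl}⟩ = ε²[(X_t)_{ik}(I^n_d)_{jl} + (X_t)_{il}(I^n_d)_{jk} + (X_t)_{jk}(I^n_d)_{il} + (X_t)_{jl}(I^n_d)_{ik}] dt. -/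
/-!
Positive semidefiniteness is that of a Gram matrix. For the covariation, write the
`dW_{ab}`-coefficient of `dX_{ij}` as `ε (U_{ai} P_{bj} + U_{aj} P_{bi})` with `P = Iⁿ_d`,
using that `Iⁿ_d` is diagonal. Summing products of two such coefficients over `(a, b)`
splits each of the four terms into a `U`-sum and a `P`-sum, giving entries of `UᵀU = X`
and of `PᵀP`, and `PᵀP = P` because `P` is a diagonal projection.
-/

open Matrix

namespace Matrix

variable {R m p q : Type*} [CommSemiring R] [Fintype m] [Fintype q]

theorem sum_sum_symm_mul_symm (U : Matrix m p R) (P : Matrix q p R) (i j k l : p) :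
    ∑ a, ∑ b, (U a i * P b j + U a j * P b i) * (U a k * P b l + U a l * P b k) =
      (Uᵀ * U) i k * (Pᵀ * P) j l + (Uᵀ * U) i l * (Pᵀ * P) j k +
        (Uᵀ * U) j k * (Pᵀ * P) i l + (Uᵀ * U) j l * (Pᵀ * P) i k := by
  simp only [mul_apply, transpose_apply, Finset.sum_mul_sum, ← Finset.sum_add_distrib]
  refine Finset.sum_congr rfl fun a _ => Finset.sum_congr rfl fun b _ => ?_
  ring

theorem ite_eq_diagonal_apply [DecidableEq p] (δ : p → R) (b j : p) :
    (if b = j then diagonal δ j j else 0) = diagonal δ b j := by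
  by_cases h : b = j <;> simp [h]

theorem transpose_mul_self_diagonal_indicator [Fintype p] [DecidableEq p] (s : p → Prop)
    [DecidablePred s] :
    (diagonal fun j => if s j then (1 : R) else 0)ᵀ * diagonal (fun j => if s j then 1 else 0) =
      diagonal fun j => if s j then 1 else 0 := by
  rw [diagonal_transpose, diagonal_mul_diagonal]
  congr 1
  ext j
  split_ifs <;> simp

end Matrix

theorem gram_psd_and_covariation_general {d n : ℕ} (ε : ℝ)
    (c : Matrix (Fin d) (Fin d) ℝ)
    (W : ℝ → Matrix (Fin d) (Fin d) ℝ) :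
    let In : Matrix (Fin d) (Fin d) ℝ :=
      Matrix.diagonal fun j : Fin d => if (j : ℕ) < n then (1 : ℝ) else 0
    let U : ℝ → Matrix (Fin d) (Fin d) ℝ := fun t => c + ε • (W t * In)
    let X : ℝ → Matrix (Fin d) (Fin d) ℝ := fun t => (U t)ᵀ * U t
    (∀ t : ℝ, (X t).PosSemidef) ∧
    (∀ t : ℝ, ∀ i j k l : Fin d,
      (∑ a : Fin d, ∑ b : Fin d,
        (ε * (U t a i * (if b = j then In j j else 0)
              + U t a j * (if b = i then In i i else 0)))
        * (ε * (U t a k * (if b = l then In l l else 0)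
              + U t a l * (if b = k then In k k else 0))))
      = ε ^ 2 * (X t i k * In j l + X t i l * In j k
          + X t j k * In i l + X t j l * In i k)) := by
  intro In U X
  refine ⟨fun t => ?_, fun t i j k l => ?_⟩
  · simpa only [conjTranspose_eq_transpose_of_trivial] using posSemidef_conjTranspose_mul_self (U t)
  · have hIn : Inᵀ * In = In := transpose_mul_self_diagonal_indicator _
    have hdiag : ∀ b j, (if b = j then In j j else 0) = In b j := ite_eq_diagonal_apply _
    simp only [hdiag]
    calc _ = ε ^ 2 * ∑ a, ∑ b, (U t a i * In b j + U t a j * In b i) *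
              (U t a k * In b l + U t a l * In b k) := by
          simp only [Finset.mul_sum]
          refine Finset.sum_congr rfl fun a _ => Finset.sum_congr rfl fun b _ => ?_
          ring
      _ = _ := by rw [sum_sum_symm_mul_symm, hIn]

/-- For U_t = c + εW_t Iⁿ_d and X_t = U_tᵀU_t: X_t is positive semidefinite, and the
quadratic covariations (computed as inner products of the dW-coefficients) satisfy
⟨dX_{ij}, dX_{kl}⟩ = ε²[X_{ik}(Iⁿ)_{jl} + X_{il}(Iⁿ)_{jk} + X_{jk}(Iⁿ)_{il} + X_{jl}(Iⁿ)_{ik}]dt. -/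
theorem gram_psd_and_covariation {d n : ℕ} (hn : n ≤ d) (ε : ℝ) (hε : 0 < ε)
    (x c : Matrix (Fin d) (Fin d) ℝ) (hx : x.PosSemidef) (hc : cᵀ * c = x)
    (W : ℝ → Matrix (Fin d) (Fin d) ℝ) :
    let In : Matrix (Fin d) (Fin d) ℝ :=
      Matrix.diagonal fun j : Fin d => if (j : ℕ) < n then (1 : ℝ) else 0
    let U : ℝ → Matrix (Fin d) (Fin d) ℝ := fun t => c + ε • (W t * In)
    let X : ℝ → Matrix (Fin d) (Fin d) ℝ := fun t => (U t)ᵀ * U t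
    (∀ t : ℝ, (X t).PosSemidef) ∧
    (∀ t : ℝ, ∀ i j k l : Fin d,
      (∑ a : Fin d, ∑ b : Fin d,
        (ε * (U t a i * (if b = j then In j j else 0)
              + U t a j * (if b = i then In i i else 0)))
        * (ε * (U t a k * (if b = l then In l l else 0)
              + U t a l * (if b = k then In k k else 0))))
      = ε ^ 2 * (X t i k * In j l + X t i l * In j k
          + X t j k * In i l + X t j l * In i k)) :=
  gram_psd_and_covariation_general ε c W
end

section
/- Let A, B : [0,∞) → 𝒮_d(ℝ) be continuous maps into symmetric matrices such that B(t) is positive semidefinite for every t ≥ 0. Suppose Υ ∈ 𝒮_d(ℝ) and g : [0,∞) → 𝒮_d(ℝ) is a C¹ solution of g'(t) = 2ε² g(t) I^n_d g(t) + g(t)A(t) + A(t)ᵀ g(t) + C(t), with Υ − g(0) positive semidefinite and, for all t ≥ 0, −[2ε² Υ I^n_d Υ + Υ A(t) + A(t)ᵀ Υ + C(t)] positive semidefinite. If h(t) := Υ − g(t), then h satisfies a linear-quadratic matrix differential inequality whose right-hand side at h = 0 is positive semidefinite; consequently (by the comparison theorem for matrix Riccati equations) Υ − g(t) is positive semidefinite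 for all t ≥ 0 in the maximal interval of existence. -/
/-!
Write `h = Υ - g`. Subtracting the Riccati right-hand sides at `Υ` and at `g` gives
`h' = D + h K + Kᵀ h` with `D = -[2ε² Υ Iⁿ Υ + Υ A + Aᵀ Υ + C] ≥ 0` and `K = A + ε² Iⁿ (Υ + g)`,
so it suffices that a linear matrix differential inequality `h' ≥ h K + Kᵀ h` preserves
positive semidefiniteness.

For the strict version (`h' - h K - Kᵀ h` and `h 0` positive definite), look at the first
time `s` at which `xᵀ h x` vanishes for some unit vector `x`. Then `h s ≥ 0`, so `h s x = 0`,
the linear terms drop out of `xᵀ h' x`, and `d/dt (xᵀ h x) > 0` at `s`; but `xᵀ h x` decreases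
to `0` from the left. The general case follows by applying the strict one on `[0, T]` to
`h + μ e^{L t} 1` with `L 1 - K - Kᵀ > 0` there, and letting `μ → 0`.
-/

open Matrix Set Filter Topology

theorem HasDerivAt.nonpos_of_eventually_nhdsLT_ge {f : ℝ → ℝ} {f' a : ℝ} (hf : HasDerivAt f f' a)
    (hle : ∀ᶠ t in 𝓝[<] a, f a ≤ f t) : f' ≤ 0 := by
  refine le_of_tendsto ((hasDerivAt_iff_tendsto_slope.mp hf).mono_left (nhdsLT_le_nhdsNE a)) ?_
  filter_upwards [hle, self_mem_nhdsWithin] with t ht (hta : t < a)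
  rw [slope_def_field]
  exact div_nonpos_of_nonneg_of_nonpos (sub_nonneg.2 ht) (sub_nonpos.2 hta.le)

theorem IsCompact.exists_first_zero {E : Type*} [TopologicalSpace E] [T2Space E] {K : Set E}
    (hK : IsCompact K) {φ : ℝ → E → ℝ} {T : ℝ}
    (hφ : ContinuousOn (Function.uncurry φ) (Icc 0 T ×ˢ K)) (h0 : ∀ x ∈ K, 0 < φ 0 x)
    {t₁ : ℝ} (ht₁ : t₁ ∈ Icc 0 T) {x₁ : E} (hx₁ : x₁ ∈ K) (hφ₁ : φ t₁ x₁ ≤ 0) :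
    ∃ s ∈ Ioc 0 T, ∃ x ∈ K, φ s x = 0 ∧ (∀ y ∈ K, 0 ≤ φ s y) ∧ ∀ t ∈ Ico 0 s, 0 < φ t x := by
  set S := Prod.fst '' (Icc 0 T ×ˢ K ∩ Function.uncurry φ ⁻¹' Iic 0)
  have hS : IsCompact S := ((isCompact_Icc.prod hK).of_isClosed_subset
    (hφ.preimage_isClosed_of_isClosed (isClosed_Icc.prod hK.isClosed) isClosed_Iic)
    inter_subset_left).image continuous_fst
  obtain ⟨⟨s, x⟩, ⟨⟨hs, hx⟩, hφx : φ s x ≤ 0⟩, hsS : s = sInf S⟩ :=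
    hS.sInf_mem ⟨t₁, (t₁, x₁), ⟨⟨ht₁, hx₁⟩, hφ₁⟩, rfl⟩
  have hbefore : ∀ t ∈ Ico 0 s, ∀ y ∈ K, 0 < φ t y := by
    intro t ht y hy
    by_contra! hφy
    exact ht.2.not_ge <| hsS ▸ csInf_le hS.bddBelow
      ⟨(t, y), ⟨⟨⟨ht.1, ht.2.le.trans hs.2⟩, hy⟩, hφy⟩, rfl⟩
  have hs0 : 0 < s := hs.1.lt_of_ne fun h => (h0 x hx).not_ge (h ▸ hφx)
  have hnonneg : ∀ y ∈ K, 0 ≤ φ s y := by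
    intro y hy
    have hcont : ContinuousWithinAt (fun t => φ t y) (Icc 0 T) s :=
      (hφ (s, y) ⟨hs, hy⟩).comp (f := fun t => (t, y))
        (continuousWithinAt_id.prodMk continuousWithinAt_const) fun t ht => ⟨ht, hy⟩
    have hIco : Ico 0 s ∈ 𝓝[<] s := Ico_mem_nhdsLT hs0
    refine ge_of_tendsto ((hcont.mono_of_mem_nhdsWithin (mem_of_superset hIco
      fun t ht => ⟨ht.1, ht.2.le.trans hs.2⟩)).tendsto) ?_
    filter_upwards [hIco] with t ht using (hbefore t ht y hy).le
  exact ⟨s, ⟨hs0, hs.2⟩, x, hx, le_antisymm hφx (hnonneg x hx), hnonneg,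
    fun t ht => hbefore t ht x hx⟩

namespace Matrix

lemma continuousOn_of_forall_hasDerivAt {m n : Type*} {F F' : ℝ → Matrix m n ℝ} {s : Set ℝ}
    (hF : ∀ t ∈ s, ∀ i j, HasDerivAt (fun u => F u i j) (F' t i j) t) : ContinuousOn F s :=
  fun t ht => continuousWithinAt_pi.2 fun i => continuousWithinAt_pi.2 fun j =>
    (hF t ht i j).continuousAt.continuousWithinAt

variable {ι : Type*} [Fintype ι]

lemma exists_mem_sphere_dotProduct_mulVec_eq (M : Matrix ι ι ℝ) {x : ι → ℝ} (hx : x ≠ 0) :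
    ∃ u ∈ Metric.sphere (0 : ι → ℝ) 1, ∃ r > 0, x ⬝ᵥ M *ᵥ x = r * (u ⬝ᵥ M *ᵥ u) := by
  have hx' : ‖x‖ ≠ 0 := norm_ne_zero_iff.2 hx
  refine ⟨‖x‖⁻¹ • x, by simp [norm_smul, hx'], ‖x‖ ^ 2, by positivity, ?_⟩
  simp only [mulVec_smul, dotProduct_smul, smul_dotProduct, smul_eq_mul]
  field_simp

lemma posSemidef_of_forall_mem_sphere {M : Matrix ι ι ℝ} (hM : M.IsSymm)
    (h : ∀ x ∈ Metric.sphere (0 : ι → ℝ) 1, 0 ≤ x ⬝ᵥ M *ᵥ x) : M.PosSemidef := by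
  refine .of_dotProduct_mulVec_nonneg (by simpa using hM) fun x => ?_
  rcases eq_or_ne x 0 with rfl | hx
  · simp
  obtain ⟨u, hu, r, hr, hxu⟩ := M.exists_mem_sphere_dotProduct_mulVec_eq hx
  simpa [hxu] using mul_nonneg hr.le (h u hu)

lemma posDef_of_forall_mem_sphere {M : Matrix ι ι ℝ} (hM : M.IsSymm)
    (h : ∀ x ∈ Metric.sphere (0 : ι → ℝ) 1, 0 < x ⬝ᵥ M *ᵥ x) : M.PosDef := by
  refine .of_dotProduct_mulVec_pos (by simpa using hM) fun x hx => ?_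
  obtain ⟨u, hu, r, hr, hxu⟩ := M.exists_mem_sphere_dotProduct_mulVec_eq hx
  simpa [hxu] using mul_pos hr (h u hu)

lemma posSemidef_of_forall_posDef_add_smul_one [DecidableEq ι] {M : Matrix ι ι ℝ}
    (hM : M.IsSymm) (h : ∀ c : ℝ, 0 < c → (M + c • 1).PosDef) : M.PosSemidef := by
  refine .of_dotProduct_mulVec_nonneg (by simpa using hM) fun x => ?_
  have hlim : Tendsto (fun c : ℝ => x ⬝ᵥ M *ᵥ x + c * (x ⬝ᵥ x)) (𝓝[>] 0)
      (𝓝 (x ⬝ᵥ M *ᵥ x)) := by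
    simpa using ((Continuous.tendsto (f := fun c : ℝ => x ⬝ᵥ M *ᵥ x + c * (x ⬝ᵥ x))
      (by fun_prop) 0).mono_left nhdsWithin_le_nhds)
  refine star_trivial x ▸ ge_of_tendsto hlim ?_
  filter_upwards [self_mem_nhdsWithin] with c (hc : 0 < c)
  rcases eq_or_ne x 0 with rfl | hx
  · simp
  simpa [add_mulVec, smul_mulVec] using ((h c hc).dotProduct_mulVec_pos hx).le

lemma abs_dotProduct_mulVec_le (M : Matrix ι ι ℝ) (x : ι → ℝ) :
    |x ⬝ᵥ M *ᵥ x| ≤ (∑ i, ∑ j, |M i j|) * (x ⬝ᵥ x) := by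
  have hsq : ∀ k, x k * x k ≤ x ⬝ᵥ x := fun k =>
    Finset.single_le_sum (f := fun i => x i * x i) (fun i _ => mul_self_nonneg _)
      (Finset.mem_univ k)
  have hprod : ∀ i j, |x i * x j| ≤ x ⬝ᵥ x := fun i j => by
    rw [abs_mul]
    nlinarith [two_mul_le_add_sq |x i| |x j|, sq_abs (x i), sq_abs (x j), hsq i, hsq j]
  calc |x ⬝ᵥ M *ᵥ x| = |∑ i, ∑ j, M i j * (x i * x j)| := by
        simp only [dotProduct, mulVec, Finset.mul_sum]
        congr 1
        exact Finset.sum_congr rfl fun i _ => Finset.sum_congr rfl fun j _ => by ring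
    _ ≤ ∑ i, ∑ j, |M i j * (x i * x j)| :=
        (Finset.abs_sum_le_sum_abs _ _).trans
          (Finset.sum_le_sum fun i _ => Finset.abs_sum_le_sum_abs _ _)
    _ ≤ ∑ i, ∑ j, |M i j| * (x ⬝ᵥ x) := by
        gcongr with i _ j _
        rw [abs_mul]
        exact mul_le_mul_of_nonneg_left (hprod i j) (abs_nonneg _)
    _ = (∑ i, ∑ j, |M i j|) * (x ⬝ᵥ x) := by simp only [Finset.sum_mul]

lemma hasDerivAt_dotProduct_mulVec {F : ℝ → Matrix ι ι ℝ} {F' : Matrix ι ι ℝ} {t : ℝ}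
    (hF : ∀ i j, HasDerivAt (fun s => F s i j) (F' i j) t) (x : ι → ℝ) :
    HasDerivAt (fun s => x ⬝ᵥ F s *ᵥ x) (x ⬝ᵥ F' *ᵥ x) t :=
  HasDerivAt.fun_sum fun i _ =>
    (HasDerivAt.fun_sum fun j _ => (hF i j).mul_const (x j)).const_mul (x i)

lemma dotProduct_mulVec_mul_add_transpose_mul_of_mulVec_eq_zero {H : Matrix ι ι ℝ}
    (hH : H.IsSymm) (K : Matrix ι ι ℝ) {x : ι → ℝ} (hx : H *ᵥ x = 0) :
    x ⬝ᵥ (H * K + Kᵀ * H) *ᵥ x = 0 := by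
  rw [add_mulVec, ← mulVec_mulVec, ← mulVec_mulVec, hx, mulVec_zero, dotProduct_add,
    dotProduct_zero, add_zero, dotProduct_mulVec, ← hH.eq, vecMul_transpose, hx, zero_dotProduct]

lemma exists_posDef_smul_one_sub [DecidableEq ι] {K : ℝ → Matrix ι ι ℝ} {s : Set ℝ}
    (hs : IsCompact s) (hK : ContinuousOn K s) :
    ∃ L : ℝ, ∀ t ∈ s, (L • 1 - (K t + (K t)ᵀ)).PosDef := by
  have hcont : Continuous fun M : Matrix ι ι ℝ => ∑ i, ∑ j, |M i j| := by fun_prop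
  obtain ⟨B, hB⟩ := (hs.image_of_continuousOn (hcont.comp_continuousOn hK)).bddAbove
  refine ⟨2 * B + 1, fun t ht => .of_dotProduct_mulVec_pos ?_ fun x hx => ?_⟩
  · simp [IsHermitian, transpose_sub, transpose_add, add_comm]
  have hxx : 0 < x ⬝ᵥ x := by simpa using dotProduct_self_star_pos_iff.2 hx
  have hbound := (le_abs_self _).trans (abs_dotProduct_mulVec_le (K t) x)
  have hBt : ∑ i, ∑ j, |K t i j| ≤ B := hB ⟨t, ht, rfl⟩
  have htr : x ⬝ᵥ (K t)ᵀ *ᵥ x = x ⬝ᵥ K t *ᵥ x := by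
    rw [dotProduct_mulVec, vecMul_transpose, dotProduct_comm]
  simp only [star_trivial, sub_mulVec, add_mulVec, smul_mulVec, one_mulVec, dotProduct_sub,
    dotProduct_add, dotProduct_smul, smul_eq_mul, htr]
  nlinarith [mul_le_mul_of_nonneg_right hBt hxx.le]

theorem posDef_of_hasDerivAt_of_posDef_sub {h h' K : ℝ → Matrix ι ι ℝ} {T : ℝ} (hT : 0 ≤ T)
    (hsymm : ∀ t, (h t).IsSymm)
    (hderiv : ∀ t ∈ Icc 0 T, ∀ i j, HasDerivAt (fun s => h s i j) (h' t i j) t)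
    (hineq : ∀ t ∈ Icc 0 T, (h' t - (h t * K t + (K t)ᵀ * h t)).PosDef)
    (h0 : (h 0).PosDef) : (h T).PosDef := by
  refine posDef_of_forall_mem_sphere (hsymm T) fun x₁ hx₁ => ?_
  by_contra! hneg
  have hcont : ContinuousOn (Function.uncurry fun t (x : ι → ℝ) => x ⬝ᵥ h t *ᵥ x)
      (Icc 0 T ×ˢ Metric.sphere 0 1) :=
    (continuous_snd.dotProduct (continuous_fst.matrix_mulVec continuous_snd)).comp_continuousOn
      (((continuousOn_of_forall_hasDerivAt hderiv).comp continuousOn_fst fun _ hp => hp.1).prodMk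
        continuousOn_snd)
  obtain ⟨s, hs, x, hx, hzero, hnonneg, hbefore⟩ :=
    (isCompact_sphere (0 : ι → ℝ) 1).exists_first_zero hcont
      (fun y hy => by simpa using h0.dotProduct_mulVec_pos (ne_zero_of_mem_unit_sphere ⟨y, hy⟩))
      ⟨hT, le_rfl⟩ hx₁ hneg
  have hker : h s *ᵥ x = 0 :=
    ((posSemidef_of_forall_mem_sphere (hsymm s) hnonneg).dotProduct_mulVec_zero_iff x).1
      (by simpa using hzero)
  have hpos : 0 < x ⬝ᵥ h' s *ᵥ x := by
    have := (hineq s (Ioc_subset_Icc_self hs)).dotProduct_mulVec_pos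
      (ne_zero_of_mem_unit_sphere ⟨x, hx⟩)
    rwa [star_trivial, sub_mulVec, dotProduct_sub,
      dotProduct_mulVec_mul_add_transpose_mul_of_mulVec_eq_zero (hsymm s) _ hker, sub_zero] at this
  have hnonpos := (hasDerivAt_dotProduct_mulVec (hderiv s (Ioc_subset_Icc_self hs)) x)
    |>.nonpos_of_eventually_nhdsLT_ge <| by
      filter_upwards [Ico_mem_nhdsLT hs.1] with t ht using hzero ▸ (hbefore t ht).le
  linarith

theorem posSemidef_of_hasDerivAt_of_posSemidef_sub [DecidableEq ι] {h h' K : ℝ → Matrix ι ι ℝ}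
    (hsymm : ∀ t, (h t).IsSymm)
    (hderiv : ∀ t, 0 ≤ t → ∀ i j, HasDerivAt (fun s => h s i j) (h' t i j) t)
    (hK : ContinuousOn K (Ici 0))
    (hineq : ∀ t, 0 ≤ t → (h' t - (h t * K t + (K t)ᵀ * h t)).PosSemidef)
    (h0 : (h 0).PosSemidef) : ∀ t, 0 ≤ t → (h t).PosSemidef := by
  intro T hT
  obtain ⟨L, hL⟩ :=
    exists_posDef_smul_one_sub (isCompact_Icc (a := 0) (b := T)) (hK.mono Icc_subset_Ici_self)
  refine posSemidef_of_forall_posDef_add_smul_one (hsymm T) fun c hc => ?_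
  set μ := c * Real.exp (-(L * T))
  have hμ : 0 < μ := by positivity
  have key := posDef_of_hasDerivAt_of_posDef_sub (K := K)
    (h := fun t => h t + (μ * Real.exp (L * t)) • 1)
    (h' := fun t => h' t + (μ * Real.exp (L * t) * L) • 1) hT
    (fun t => (hsymm t).add (isSymm_one.smul _)) ?deriv ?ineq ?init
  · simpa [μ, mul_assoc, ← Real.exp_add] using key
  case deriv =>
    intro t ht i j
    simp only [add_apply, smul_apply, smul_eq_mul]
    exact (hderiv t ht.1 i j).add <|
      (((hasDerivAt_id' t).const_mul L).exp.const_mul μ).mul_const _ |>.congr_deriv (by ring)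
  case ineq =>
    intro t ht
    have : ∀ (H H' M : Matrix ι ι ℝ) (a : ℝ),
        H' + (a * L) • 1 - ((H + a • 1) * M + Mᵀ * (H + a • 1))
          = H' - (H * M + Mᵀ * H) + a • (L • 1 - (M + Mᵀ)) := by
      intro H H' M a
      simp only [add_mul, mul_add, smul_mul_assoc, mul_smul_comm, one_mul, mul_one]
      module
    rw [this]
    exact PosDef.posSemidef_add (hineq t ht.1) ((hL t ht).smul (by positivity))
  case init => simpa using PosDef.posSemidef_add h0 (PosDef.one.smul hμ)

theorem riccati_sub_riccati {N P Q : Matrix ι ι ℝ} (hN : N.IsSymm) (hP : P.IsSymm)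
    (hQ : Q.IsSymm) (a : ℝ) (A C : Matrix ι ι ℝ) :
    (2 * a) • (P * N * P) + P * A + Aᵀ * P + C - ((2 * a) • (Q * N * Q) + Q * A + Aᵀ * Q + C)
      = (P - Q) * (A + a • (N * (P + Q))) + (A + a • (N * (P + Q)))ᵀ * (P - Q) := by
  rw [transpose_add, transpose_smul, transpose_mul, transpose_add, hN.eq, hP.eq, hQ.eq]
  simp only [mul_add, add_mul, sub_mul, mul_sub, smul_mul_assoc, mul_smul_comm, mul_assoc]
  module

end Matrix

theorem riccati_comparison_general {d n : ℕ} (ε : ℝ)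
    (A C : ℝ → Matrix (Fin d) (Fin d) ℝ) (hA : Continuous A)
    (Υ : Matrix (Fin d) (Fin d) ℝ) (hΥ : Υ.IsSymm)
    (g : ℝ → Matrix (Fin d) (Fin d) ℝ) (hgsym : ∀ t, (g t).IsSymm)
    (hg : ∀ t : ℝ, 0 ≤ t → ∀ i j, HasDerivAt (fun s => g s i j)
      (((2 * ε ^ 2) •
          (g t * Matrix.diagonal (fun i : Fin d => if (i : ℕ) < n then (1:ℝ) else 0) * g t)
        + g t * A t + (A t)ᵀ * g t + C t) i j) t)
    (h0 : (Υ - g 0).PosSemidef)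
    (hdom : ∀ t : ℝ, 0 ≤ t →
      (-((2 * ε ^ 2) •
          (Υ * Matrix.diagonal (fun i : Fin d => if (i : ℕ) < n then (1:ℝ) else 0) * Υ)
        + Υ * A t + (A t)ᵀ * Υ + C t)).PosSemidef) :
    ∀ t : ℝ, 0 ≤ t → (Υ - g t).PosSemidef := by
  set N := Matrix.diagonal (fun i : Fin d => if (i : ℕ) < n then (1:ℝ) else 0)
  have hK : ContinuousOn (fun t => A t + ε ^ 2 • (N * (Υ + g t))) (Ici 0) :=
    hA.continuousOn.add <| (by fun_prop : Continuous fun M => ε ^ 2 • (N * (Υ + M)))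
      |>.comp_continuousOn (continuousOn_of_forall_hasDerivAt (s := Ici 0) hg)
  refine posSemidef_of_hasDerivAt_of_posSemidef_sub (h := fun t => Υ - g t)
    (h' := fun t => -((2 * ε ^ 2) • (g t * N * g t) + g t * A t + (A t)ᵀ * g t + C t))
    (fun t => hΥ.sub (hgsym t)) (fun t ht i j => (hg t ht i j).const_sub (Υ i j)) hK
    (fun t ht => ?_) h0
  convert hdom t ht using 1
  rw [← riccati_sub_riccati (isSymm_diagonal _) hΥ (hgsym t)]
  abel

/-- Matrix Riccati comparison (Dieci–Eirola): if g solves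
g' = 2ε² g Iⁿ g + gA + Aᵀg + C with Υ - g(0) PSD and
-[2ε² Υ Iⁿ Υ + ΥA + AᵀΥ + C] PSD for all t, then Υ - g(t) stays PSD. -/
theorem riccati_comparison {d n : ℕ} (ε : ℝ) (hε : 0 ≤ ε)
    (A C : ℝ → Matrix (Fin d) (Fin d) ℝ) (hA : Continuous A) (hC : Continuous C)
    (hCsym : ∀ t, (C t).IsSymm)
    (Υ : Matrix (Fin d) (Fin d) ℝ) (hΥ : Υ.IsSymm)
    (g : ℝ → Matrix (Fin d) (Fin d) ℝ) (hgsym : ∀ t, (g t).IsSymm)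
    (hg : ∀ t : ℝ, 0 ≤ t → ∀ i j, HasDerivAt (fun s => g s i j)
      (((2 * ε ^ 2) •
          (g t * Matrix.diagonal (fun i : Fin d => if (i : ℕ) < n then (1:ℝ) else 0) * g t)
        + g t * A t + (A t)ᵀ * g t + C t) i j) t)
    (h0 : (Υ - g 0).PosSemidef)
    (hdom : ∀ t : ℝ, 0 ≤ t →
      (-((2 * ε ^ 2) •
          (Υ * Matrix.diagonal (fun i : Fin d => if (i : ℕ) < n then (1:ℝ) else 0) * Υ)
        + Υ * A t + (A t)ᵀ * Υ + C t)).PosSemidef) :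
    ∀ t : ℝ, 0 ≤ t → (Υ - g t).PosSemidef :=
  riccati_comparison_general ε A C hA Υ hΥ g hgsym hg h0 hdom
end
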